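/- The functions f = e^{x₇}, q₂ = -√2 x₄, q₃ = √2(x₅/2 - x₆) + (-x₄ + x₅ + x₇/√2)x₆e^{-x₇}, q₄ = x₅ - 2x₆ + x₆e^{-x₇}, s₂ = 0, s₃ = -x₄/√2 + x₃ satisfy equation (Eb1) of the paper: (s₂ - q₃)_{x₂} = 0, (s₂ - q₃)_{x₃} = 0, and (s₂ - q₃)_{x₄} = -(q₄)_{x₇}. -/

import Mathlib

noncomputable section

/-- Partial derivative of `f` at `x` in the `i`-th coordinate direction. -/
def pd {n : ℕ} (i : Fin n) (f : (Fin n → ℝ) → ℝ) (x : Fin n → ℝ) : ℝ :=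
  fderiv ℝ f x (Pi.single i 1)

/- Coordinates on ℝ⁷: index i ↔ x_{i+1}. -/

def q₃14 (x : Fin 7 → ℝ) : ℝ :=
  Real.sqrt 2 * (x 4 / 2 - x 5) + (-x 3 + x 4 + x 6 / Real.sqrt 2) * x 5 * Real.exp (-x 6)
def q₄14 (x : Fin 7 → ℝ) : ℝ := x 4 - 2 * x 5 + x 5 * Real.exp (-x 6)
def s₂14 (_x : Fin 7 → ℝ) : ℝ := 0
def s₃14 (x : Fin 7 → ℝ) : ℝ := -x 3 / Real.sqrt 2 + x 2
def f14 (x : Fin 7 → ℝ) : ℝ := Real.exp (x 6)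
def q₂14 (x : Fin 7 → ℝ) : ℝ := -Real.sqrt 2 * x 3

/-! A partial derivative of a differentiable function is the ordinary derivative of its restriction
to the coordinate line. Along the lines in the directions of `x₂` and `x₃`, `s₂ - q₃` is constant;
along the `x₄`-line, `s₂ - q₃` has slope `x₆ e^{-x₇}`, and so does `-q₄` along the `x₇`-line. -/

open Function

theorem pd_eq_deriv_update {n : ℕ} {f : (Fin n → ℝ) → ℝ} {x : Fin n → ℝ}
    (hf : DifferentiableAt ℝ f x) (i : Fin n) :
    pd i f x = deriv (fun t => f (update x i t)) (x i) :=
  (hf.hasFDerivAt.comp_hasDerivAt_of_eq (x i) (hasDerivAt_update x i (x i))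
    (update_eq_self i x).symm).deriv.symm

@[fun_prop]
theorem differentiable_s₂14 : Differentiable ℝ s₂14 := by unfold s₂14; fun_prop

@[fun_prop]
theorem differentiable_q₃14 : Differentiable ℝ q₃14 := by unfold q₃14; fun_prop

@[fun_prop]
theorem differentiable_q₄14 : Differentiable ℝ q₄14 := by unfold q₄14; fun_prop

theorem pd_three_s₂14_sub_q₃14 (x : Fin 7 → ℝ) :
    pd 3 (fun y => s₂14 y - q₃14 y) x = x 5 * Real.exp (-x 6) := by
  rw [pd_eq_deriv_update (by fun_prop)]
  simp [s₂14, q₃14]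

theorem pd_six_q₄14 (x : Fin 7 → ℝ) : pd 6 q₄14 x = -(x 5 * Real.exp (-x 6)) := by
  rw [pd_eq_deriv_update (by fun_prop)]
  simp [q₄14, (hasDerivAt_neg (x 6)).exp.deriv]

/-- The explicit functions of Section 3.2 satisfy equation (Eb1):
(s₂-q₃)_{x₂} = 0, (s₂-q₃)_{x₃} = 0, (s₂-q₃)_{x₄} = -(q₄)_{x₇}. -/
theorem Eb1_holds :
    (∀ x, pd 1 (fun y => s₂14 y - q₃14 y) x = 0) ∧
    (∀ x, pd 2 (fun y => s₂14 y - q₃14 y) x = 0) ∧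
    (∀ x, pd 3 (fun y => s₂14 y - q₃14 y) x = -(pd 6 q₄14 x)) := by
  refine ⟨fun x => ?_, fun x => ?_, fun x => ?_⟩
  · rw [pd_eq_deriv_update (by fun_prop)]
    simp [s₂14, q₃14]
  · rw [pd_eq_deriv_update (by fun_prop)]
    simp [s₂14, q₃14]
  · rw [pd_three_s₂14_sub_q₃14, pd_six_q₄14, neg_neg]
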